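/- Let (L₁, …, L_h; w₁, …, w_h) be a vertex hierarchy of height h on the weighted graph G = (V, w₁). Then for all s, t ∈ V: dist_G(s,t) = ⨅_{x ∈ Anc(s) ∩ Anc(t)} ( d(s,x) + d(t,x) ), where the infimum in ℕ∞ over the empty set is ⊤. -/

import Mathlib

namespace ISLabel

variable {V : Type*}

/-- Two vertices are adjacent in the weighted graph `w` when they are distinct and
joined by an edge of finite weight. -/
def Adj (w : V → V → ℕ∞) (u v : V) : Prop := u ≠ v ∧ w u v < ⊤

/-- `p` is a walk from `u` to `v` in the weighted graph `w`: a nonempty list of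
vertices starting at `u`, ending at `v`, with consecutive vertices adjacent. -/
def IsWalk (w : V → V → ℕ∞) (u v : V) (p : List V) : Prop :=
  p ≠ [] ∧ p.head? = some u ∧ p.getLast? = some v ∧ p.Chain' (Adj w)

/-- The length of a list of vertices: the sum of `f` over consecutive pairs. -/
def pathLen (f : V → V → ℕ∞) (p : List V) : ℕ∞ :=
  ((p.zip p.tail).map fun e => f e.1 e.2).sum

/-- The distance from `u` to `v` in `w`: the infimum of the lengths of all walks
from `u` to `v` (`⊤` if there is no such walk). -/
noncomputable def wdist (w : V → V → ℕ∞) (u v : V) : ℕ∞ :=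
  ⨅ p : {p : List V // IsWalk w u v p}, pathLen w p.1

/-- `I` is an independent set in `w`. -/
def IsIndep (w : V → V → ℕ∞) (I : Set V) : Prop :=
  ∀ u ∈ I, ∀ v ∈ I, ¬ Adj w u v

/-- `w` is a weighted undirected graph: symmetric, and every off-diagonal value is
either `⊤` (no edge) or a weight `≥ 1`. -/
def IsWGraph (w : V → V → ℕ∞) : Prop :=
  (∀ u v, w u v = w v u) ∧ ∀ u v, u ≠ v → 1 ≤ w u v

/-- `w` is supported on `S`: all weights touching a vertex outside `S` are `⊤`. -/
def SupportedOn (w : V → V → ℕ∞) (S : Set V) : Prop :=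
  ∀ u v, u ∉ S ∨ v ∉ S → w u v = ⊤

/-- `VsetOf L i` is the vertex set `V_i = V ∖ (L₁ ∪ … ∪ L_{i-1})`. -/
def VsetOf (L : ℕ → Set V) (i : ℕ) : Set V := {v | ∀ j, 1 ≤ j → j < i → v ∉ L j}

/-- A vertex hierarchy of height `h ≥ 1` on the weighted graph `w 1`:
pairwise disjoint independent levels `L 1, …, L h` covering `V`, and graphs
`w i` supported on `V_i` obtained by the augmenting-edge construction. -/
structure VertexHierarchy (V : Type*) (h : ℕ) where
  L : ℕ → Set V
  w : ℕ → V → V → ℕ∞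
  h_pos : 1 ≤ h
  wgraph : ∀ i, 1 ≤ i → i ≤ h → IsWGraph (w i)
  disj : ∀ i j, 1 ≤ i → i ≤ h → 1 ≤ j → j ≤ h → i ≠ j → ∀ v, v ∈ L i → v ∉ L j
  cover : ∀ v : V, ∃ i, 1 ≤ i ∧ i ≤ h ∧ v ∈ L i
  supported : ∀ i, 1 ≤ i → i ≤ h → SupportedOn (w i) (VsetOf L i)
  aug : ∀ i, 2 ≤ i → i ≤ h → ∀ u v : V, u ≠ v → u ∈ VsetOf L i → v ∈ VsetOf L i →
    w i u v = min (w (i - 1) u v) (⨅ x ∈ L (i - 1), w (i - 1) u x + w (i - 1) x v)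
  indep : ∀ i, 1 ≤ i → i ≤ h → IsIndep (w i) (L i)

/-- The level `ℓ(v)`: the unique `i` with `1 ≤ i ≤ h` and `v ∈ L i`. -/
noncomputable def level {h : ℕ} (H : VertexHierarchy V h) (v : V) : ℕ :=
  sInf {i | 1 ≤ i ∧ i ≤ h ∧ v ∈ H.L i}

/-- One step of an ascending sequence: go to a strictly higher-level vertex that is
adjacent in the graph at the current vertex's level. -/
def AscStep {h : ℕ} (H : VertexHierarchy V h) (a b : V) : Prop :=
  level H a < level H b ∧ Adj (H.w (level H a)) a b

/-- `p` is an ascending sequence from `v` to `u`. -/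
def IsAscending {h : ℕ} (H : VertexHierarchy V h) (v u : V) (p : List V) : Prop :=
  p ≠ [] ∧ p.head? = some v ∧ p.getLast? = some u ∧ p.Chain' (AscStep H)

/-- The set of ancestors of `v`. -/
def Anc {h : ℕ} (H : VertexHierarchy V h) (v : V) : Set V :=
  {u | ∃ p, IsAscending H v u p}

/-- `d(v,u)`: the infimum of the lengths of ascending sequences from `v` to `u`,
where each step `a → b` costs `w (ℓ(a)) a b`; `⊤` if `u` is not an ancestor of `v`. -/
noncomputable def ancDist {h : ℕ} (H : VertexHierarchy V h) (v u : V) : ℕ∞ :=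
  ⨅ p : {p : List V // IsAscending H v u p},
    pathLen (fun a b => H.w (level H a) a b) p.1

/-!
Every walk from `s` to `t` in `G` can be turned, without getting longer, into an ascending
sequence from `s` and one from `t` that meet in a common ancestor. Induct on the length of the
walk and look at a vertex `m` of minimal level on it; since `L_{ℓ(m)}` is independent, its
neighbours on the walk lie strictly higher. If `m` is an endpoint, the walk leaves it by an
ascending step. Otherwise its two neighbours `a`, `c` are joined in `G_{ℓ(m)+1}` by an augmenting
edge no longer than `a m c`, and the walk gets shorter. For the bookkeeping each edge `a b` is
weighed in the graph of the lower of the levels of `a` and `b` (`lowWeight`), which only decreases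
lengths. Conversely, every augmenting edge is realized by a walk in `G`, so `dist_G(s,t)` is at
most every `d(s,x) + d(t,x)`.
-/

section Walk

variable {w f : V → V → ℕ∞} {u v : V}

@[simp] lemma pathLen_singleton (a : V) : pathLen f [a] = 0 := rfl

@[simp] lemma pathLen_cons_cons (a b : V) (l : List V) :
    pathLen f (a :: b :: l) = f a b + pathLen f (b :: l) := rfl

lemma pathLen_append_cons (p r : List V) (a : V) :
    pathLen f (p ++ a :: r) = pathLen f (p ++ [a]) + pathLen f (a :: r) := by
  induction p with
  | nil => simp
  | cons x p ih =>
    cases p with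
    | nil => simp
    | cons y p => simp_all [add_assoc]

lemma pathLen_reverse (hf : ∀ a b, f a b = f b a) (l : List V) :
    pathLen f l.reverse = pathLen f l := by
  induction l with
  | nil => rfl
  | cons a l ih =>
    cases l with
    | nil => rfl
    | cons b l =>
      rw [List.reverse_cons, List.reverse_cons, List.append_assoc, List.singleton_append,
        pathLen_append_cons, ← List.reverse_cons, ih]
      simp [hf b a, add_comm]

lemma isWalk_iff {l : List V} :
    IsWalk w u v l ↔ l ≠ [] ∧ l.head? = some u ∧ l.getLast? = some v ∧ l.IsChain (Adj w) :=
  Iff.rfl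

lemma isWalk_singleton {x : V} : IsWalk w u v [x] ↔ x = u ∧ x = v := by
  simp [isWalk_iff, eq_comm]

lemma isWalk_cons_cons {x b : V} {l : List V} :
    IsWalk w u v (x :: b :: l) ↔ x = u ∧ Adj w u b ∧ IsWalk w b v (b :: l) := by
  simp only [isWalk_iff, List.isChain_cons_cons, List.head?_cons, List.getLast?_cons_cons,
    Option.some_inj, ne_eq, reduceCtorEq, not_false_eq_true, true_and]
  constructor <;> rintro ⟨rfl, h₁, h₂, h₃⟩ <;> exact ⟨rfl, h₂, h₁, h₃⟩

lemma isWalk_append_cons {p r : List V} {a : V} :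
    IsWalk w u v (p ++ a :: r) ↔ IsWalk w u a (p ++ [a]) ∧ IsWalk w a v (a :: r) := by
  have hhead : (p ++ a :: r).head? = (p ++ [a]).head? := by cases p <;> rfl
  have hlast : (p ++ a :: r).getLast? = (a :: r).getLast? := by
    rw [List.getLast?_append, List.getLast?_cons]; rfl
  rw [isWalk_iff, isWalk_iff, isWalk_iff, hhead, hlast, List.isChain_split, List.getLast?_concat]
  simp only [ne_eq, List.append_eq_nil_iff, reduceCtorEq, and_false, not_false_eq_true,
    List.head?_cons, true_and]
  tauto

lemma IsWalk.reverse (hw : ∀ a b, w a b = w b a) {l : List V} (hl : IsWalk w u v l) :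
    IsWalk w v u l.reverse := by
  obtain ⟨hne, hu, hv, hc⟩ := hl
  refine ⟨by simpa using hne, by simpa using hv, by simpa using hu, List.isChain_reverse.2 ?_⟩
  exact hc.imp fun {a b} hab => ⟨hab.1.symm, hw a b ▸ hab.2⟩

lemma IsWalk.exists_eq_cons {l : List V} (hl : IsWalk w u v l) : ∃ t, l = u :: t :=
  List.head?_eq_some_iff.1 hl.2.1

lemma IsWalk.exists_eq_concat {l : List V} (hl : IsWalk w u v l) : ∃ t, l = t ++ [v] :=
  ⟨l.dropLast, (List.dropLast_append_getLast? v hl.2.2.1).symm⟩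

lemma wdist_le_pathLen {l : List V} (hl : IsWalk w u v l) : wdist w u v ≤ pathLen w l :=
  iInf_le (fun p : {p : List V // IsWalk w u v p} => pathLen w p.1) ⟨l, hl⟩

lemma wdist_self (v : V) : wdist w v v = 0 :=
  nonpos_iff_eq_zero.1 (wdist_le_pathLen (isWalk_singleton.2 ⟨rfl, rfl⟩))

lemma wdist_le_weight (u v : V) : wdist w u v ≤ w u v := by
  rcases eq_or_ne u v with rfl | huv
  · simp [wdist_self]
  rcases eq_or_ne (w u v) ⊤ with htop | hlt
  · simp [htop]
  · simpa using wdist_le_pathLen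
      (isWalk_cons_cons.2 ⟨rfl, ⟨huv, hlt.lt_top⟩, isWalk_singleton.2 ⟨rfl, rfl⟩⟩)

lemma wdist_triangle (u m v : V) : wdist w u v ≤ wdist w u m + wdist w m v := by
  refine ENat.le_iInf_add_iInf fun ⟨p, hp⟩ ⟨q, hq⟩ => ?_
  obtain ⟨p, rfl⟩ := hp.exists_eq_concat
  obtain ⟨q, rfl⟩ := hq.exists_eq_cons
  rw [← pathLen_append_cons]
  exact wdist_le_pathLen (isWalk_append_cons.2 ⟨hp, hq⟩)

lemma wdist_comm (hw : ∀ a b, w a b = w b a) (u v : V) : wdist w u v = wdist w v u := by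
  have key : ∀ a b, wdist w a b ≤ wdist w b a := fun a b =>
    le_iInf fun ⟨l, hl⟩ => (wdist_le_pathLen (hl.reverse hw)).trans_eq (pathLen_reverse hw l)
  exact (key u v).antisymm (key v u)

lemma wdist_le_pathLen_of_isChain {R : V → V → Prop} (hR : ∀ a b, R a b → wdist w a b ≤ f a b)
    {l : List V} (hl : l.IsChain R) (hu : l.head? = some u) (hv : l.getLast? = some v) :
    wdist w u v ≤ pathLen f l := by
  induction l generalizing u with
  | nil => simp at hu
  | cons x l ih =>
    obtain rfl : x = u := by simpa using hu
    cases l with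
    | nil =>
      obtain rfl : x = v := by simpa using hv
      simp [wdist_self]
    | cons b l =>
      rw [List.isChain_cons_cons] at hl
      rw [List.getLast?_cons_cons] at hv
      calc wdist w x v ≤ wdist w x b + wdist w b v := wdist_triangle x b v
        _ ≤ f x b + pathLen f (b :: l) := add_le_add (hR x b hl.1) (ih hl.2 rfl hv)
        _ = pathLen f (x :: b :: l) := rfl

end Walk

section Descent

variable {f D : V → V → ℕ∞} {ℓ : V → ℕ}

lemma exists_shorter_walk_of_valley (hf : ∀ a b, f a b = f b a)
    (hℓ : ∀ a b, Adj f a b → ℓ a ≠ ℓ b)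
    (hvalley : ∀ m a c, ℓ m < ℓ a → ℓ m < ℓ c → a ≠ c → f a c ≤ f m a + f m c)
    {u v a m c : V} {p q : List V} (hl : IsWalk f u v (p ++ a :: m :: c :: q))
    (ha : ℓ m ≤ ℓ a) (hc : ℓ m ≤ ℓ c) :
    ∃ l, l.length < (p ++ a :: m :: c :: q).length ∧ IsWalk f u v l ∧
      pathLen f l ≤ pathLen f (p ++ a :: m :: c :: q) := by
  obtain ⟨hp, hamcq⟩ := isWalk_append_cons.1 hl
  obtain ⟨-, ham, hmcq⟩ := isWalk_cons_cons.1 hamcq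
  obtain ⟨-, hmc, hcq⟩ := isWalk_cons_cons.1 hmcq
  have ha' : ℓ m < ℓ a := ha.lt_of_ne (hℓ a m ham).symm
  have hc' : ℓ m < ℓ c := hc.lt_of_ne (hℓ m c hmc)
  rcases eq_or_ne a c with rfl | hac
  · refine ⟨p ++ a :: q, by simp, isWalk_append_cons.2 ⟨hp, hcq⟩, ?_⟩
    rw [pathLen_append_cons p q, pathLen_append_cons p (m :: a :: q)]
    gcongr pathLen f (p ++ [a]) + ?_
    rw [pathLen_cons_cons, pathLen_cons_cons]
    exact le_add_self.trans le_add_self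
  · have hle : f a c ≤ f a m + f m c := (hvalley m a c ha' hc' hac).trans_eq (by rw [hf m a])
    have hadj : Adj f a c := ⟨hac, hle.trans_lt (ENat.add_lt_top.2 ⟨ham.2, hmc.2⟩)⟩
    refine ⟨p ++ a :: c :: q, by simp,
      isWalk_append_cons.2 ⟨hp, isWalk_cons_cons.2 ⟨rfl, hadj, hcq⟩⟩, ?_⟩
    rw [pathLen_append_cons p (c :: q), pathLen_append_cons p (m :: c :: q)]
    gcongr pathLen f (p ++ [a]) + ?_
    rw [pathLen_cons_cons, pathLen_cons_cons, pathLen_cons_cons, ← add_assoc]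
    gcongr

lemma le_pathLen_cons_of_minimal (hℓ : ∀ a b, Adj f a b → ℓ a ≠ ℓ b) (hD₀ : ∀ v, D v v = 0)
    (hstep : ∀ u b v, Adj f u b → ℓ u < ℓ b → D u v ≤ f u b + D b v)
    {m v : V} {q : List V} (hl : IsWalk f m v (m :: q)) (hmin : ∀ x ∈ q, ℓ m ≤ ℓ x)
    (ih : ∀ {b}, IsWalk f b v q → D b v ≤ pathLen f q) : D m v ≤ pathLen f (m :: q) := by
  cases q with
  | nil => simp [← (isWalk_singleton.1 hl).2, hD₀]
  | cons c q =>
    obtain ⟨-, hmc, hcq⟩ := isWalk_cons_cons.1 hl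
    calc D m v ≤ f m c + D c v := hstep m c v hmc ((hmin c (by simp)).lt_of_ne (hℓ m c hmc))
      _ ≤ f m c + pathLen f (c :: q) := by gcongr; exact ih hcq
      _ = pathLen f (m :: c :: q) := rfl

theorem le_pathLen_of_isWalk (hf : ∀ a b, f a b = f b a)
    (hℓ : ∀ a b, Adj f a b → ℓ a ≠ ℓ b)
    (hvalley : ∀ m a c, ℓ m < ℓ a → ℓ m < ℓ c → a ≠ c → f a c ≤ f m a + f m c)
    (hD : ∀ u v, D u v = D v u) (hD₀ : ∀ v, D v v = 0)
    (hstep : ∀ u b v, Adj f u b → ℓ u < ℓ b → D u v ≤ f u b + D b v)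
    {u v : V} {l : List V} (hl : IsWalk f u v l) : D u v ≤ pathLen f l := by
  induction hn : l.length using Nat.strong_induction_on generalizing u v l with
  | _ n ih =>
  subst hn
  obtain ⟨m, hm, hmin⟩ :=
    Set.exists_min_image {x | x ∈ l} ℓ l.finite_toSet ⟨u, List.mem_of_mem_head? hl.2.1⟩
  obtain ⟨p, q, rfl⟩ := List.append_of_mem hm
  rcases q with _ | ⟨c, q⟩
  -- `m` is the last vertex: read the walk backwards.
  · obtain rfl : m = v := by simpa using hl.2.2.1
    have hr := hl.reverse hf
    rw [List.reverse_concat] at hr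
    rw [hD, ← pathLen_reverse hf, List.reverse_concat]
    exact le_pathLen_cons_of_minimal hℓ hD₀ hstep hr (fun x hx => hmin x (by simp_all))
      fun hq => ih _ (by simp) hq rfl
  rcases List.eq_nil_or_concat p with rfl | ⟨p, a, rfl⟩
  · obtain ⟨rfl, -⟩ := isWalk_cons_cons.1 hl
    exact le_pathLen_cons_of_minimal hℓ hD₀ hstep hl (fun x hx => hmin x (by simp_all))
      fun hq => ih _ (by simp) hq rfl
  · simp only [List.concat_eq_append, List.append_assoc, List.singleton_append] at hl hmin ih ⊢
    obtain ⟨l, hlen, hl', hle⟩ :=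
      exists_shorter_walk_of_valley hf hℓ hvalley hl (hmin a (by simp)) (hmin c (by simp))
    exact (ih _ hlen hl' rfl).trans hle

end Descent

section Hierarchy

variable {h : ℕ} (H : VertexHierarchy V h)

lemma level_spec (v : V) : 1 ≤ level H v ∧ level H v ≤ h ∧ v ∈ H.L (level H v) :=
  Nat.sInf_mem (H.cover v)

lemma level_eq_of_mem {v : V} {i : ℕ} (hi : 1 ≤ i) (hih : i ≤ h) (hv : v ∈ H.L i) :
    level H v = i := by
  by_contra hne
  obtain ⟨h1, hh, hmem⟩ := level_spec H v
  exact H.disj _ _ h1 hh hi hih hne v hmem hv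

lemma mem_vsetOf_of_le_level {v : V} {i : ℕ} (hi : i ≤ level H v) : v ∈ VsetOf H.L i :=
  fun _ hj hji hv =>
    (level_eq_of_mem H hj ((hji.trans_le hi).le.trans (level_spec H v).2.1) hv ▸ hji).not_ge hi

lemma w_comm {i : ℕ} (hi : 1 ≤ i) (hih : i ≤ h) (a b : V) : H.w i a b = H.w i b a :=
  (H.wgraph i hi hih).1 a b

lemma w_antitone {i j : ℕ} (hi : 1 ≤ i) (hij : i ≤ j) {u v : V} (huv : u ≠ v)
    (hu : j ≤ level H u) (hv : j ≤ level H v) : H.w j u v ≤ H.w i u v := by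
  induction j, hij using Nat.le_induction with
  | base => rfl
  | succ j hij ih =>
    rw [H.aug (j + 1) (by omega) (hu.trans (level_spec H u).2.1) u v huv
      (mem_vsetOf_of_le_level H hu) (mem_vsetOf_of_le_level H hv), Nat.add_sub_cancel]
    exact (min_le_left _ _).trans (ih (by omega) (by omega))

lemma wdist_le_w {i : ℕ} (hi : 1 ≤ i) (hih : i ≤ h) (a b : V) :
    wdist (H.w 1) a b ≤ H.w i a b := by
  induction i, hi using Nat.le_induction generalizing a b with
  | base => exact wdist_le_weight a b
  | succ i hi ih =>
    rcases eq_or_ne a b with rfl | hab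
    · simp [wdist_self]
    by_cases hmem : a ∈ VsetOf H.L (i + 1) ∧ b ∈ VsetOf H.L (i + 1)
    · rw [H.aug (i + 1) (by omega) hih a b hab hmem.1 hmem.2, Nat.add_sub_cancel]
      refine le_min (ih (by omega) a b) (le_iInf₂ fun x _ => ?_)
      exact (wdist_triangle a x b).trans (add_le_add (ih (by omega) a x) (ih (by omega) x b))
    · rw [H.supported (i + 1) (by omega) hih a b (by tauto)]
      exact le_top

noncomputable def lowWeight (a b : V) : ℕ∞ := H.w (min (level H a) (level H b)) a b

lemma lowWeight_comm (a b : V) : lowWeight H a b = lowWeight H b a := by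
  rw [lowWeight, lowWeight, min_comm, w_comm H (le_min (level_spec H b).1 (level_spec H a).1)
    ((min_le_left _ _).trans (level_spec H b).2.1)]

lemma lowWeight_of_level_lt {a b : V} (hab : level H a < level H b) :
    lowWeight H a b = H.w (level H a) a b := by
  rw [lowWeight, min_eq_left hab.le]

lemma level_ne_of_adj_lowWeight {a b : V} (hab : Adj (lowWeight H) a b) :
    level H a ≠ level H b := by
  intro heq
  obtain ⟨h1, hh, ha⟩ := level_spec H a
  refine H.indep _ h1 hh a ha b (heq ▸ (level_spec H b).2.2) ?_
  simpa [Adj, lowWeight, heq] using hab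

lemma lowWeight_le_add_of_valley {m a c : V} (ha : level H m < level H a)
    (hc : level H m < level H c) (hac : a ≠ c) :
    lowWeight H a c ≤ lowWeight H m a + lowWeight H m c := by
  obtain ⟨h1, -, hm⟩ := level_spec H m
  have hh : level H m + 1 ≤ h := ha.trans_le (level_spec H a).2.1
  calc lowWeight H a c ≤ H.w (level H m + 1) a c :=
        w_antitone H (by omega) (le_min ha hc) hac (min_le_left _ _) (min_le_right _ _)
    _ ≤ H.w (level H m) a m + H.w (level H m) m c := by
        rw [H.aug _ (by omega) hh a c hac (mem_vsetOf_of_le_level H ha)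
          (mem_vsetOf_of_le_level H hc), Nat.add_sub_cancel]
        exact (min_le_right _ _).trans (iInf₂_le m hm)
    _ = lowWeight H m a + lowWeight H m c := by
        rw [lowWeight_of_level_lt H ha, lowWeight_of_level_lt H hc, w_comm H h1 (by omega)]

lemma wdist_lowWeight_le_wdist (u v : V) : wdist (lowWeight H) u v ≤ wdist (H.w 1) u v :=
  le_iInf fun ⟨_, _, hu, hv, hl⟩ => wdist_le_pathLen_of_isChain (fun a b hab =>
    (wdist_le_weight a b).trans (w_antitone H le_rfl (le_min (level_spec H a).1
      (level_spec H b).1) hab.1 (min_le_left _ _) (min_le_right _ _))) hl hu hv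

end Hierarchy

section Ancestors

variable {h : ℕ} (H : VertexHierarchy V h)

lemma isAscending_iff {v u : V} {l : List V} :
    IsAscending H v u l ↔
      l ≠ [] ∧ l.head? = some v ∧ l.getLast? = some u ∧ l.IsChain (AscStep H) :=
  Iff.rfl

lemma isAscending_singleton (v : V) : IsAscending H v v [v] :=
  (isAscending_iff H).2 ⟨by simp, rfl, rfl, by simp⟩

lemma IsAscending.exists_eq_cons {v x : V} {l : List V} (hl : IsAscending H v x l) :
    ∃ t, l = v :: t :=
  List.head?_eq_some_iff.1 hl.2.1

lemma IsAscending.cons {u b x : V} {l : List V} (hub : AscStep H u b)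
    (hl : IsAscending H b x l) : IsAscending H u x (u :: l) := by
  obtain ⟨t, rfl⟩ := hl.exists_eq_cons
  obtain ⟨-, -, hx, hc⟩ := (isAscending_iff H).1 hl
  exact (isAscending_iff H).2 ⟨by simp, rfl, by simpa using hx, hc.cons_cons hub⟩

lemma ancDist_self (v : V) : ancDist H v v = 0 :=
  nonpos_iff_eq_zero.1 <| iInf_le_of_le ⟨[v], isAscending_singleton H v⟩ le_rfl

lemma ancDist_le_add_of_ascStep {u b x : V} (hub : AscStep H u b) :
    ancDist H u x ≤ H.w (level H u) u b + ancDist H b x := by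
  rw [ancDist, ancDist, ENat.add_iInf]
  refine le_iInf fun ⟨l, hl⟩ => iInf_le_of_le ⟨u :: l, hl.cons H hub⟩ ?_
  obtain ⟨t, rfl⟩ := hl.exists_eq_cons
  rfl

lemma wdist_le_ancDist (v x : V) : wdist (H.w 1) v x ≤ ancDist H v x :=
  le_iInf fun ⟨_, _, hv, hx, hl⟩ => wdist_le_pathLen_of_isChain
    (fun a _ _ => wdist_le_w H (level_spec H a).1 (level_spec H a).2.1 _ _) hl hv hx

noncomputable def labelDist (u v : V) : ℕ∞ :=
  ⨅ x ∈ Anc H u ∩ Anc H v, (ancDist H u x + ancDist H v x)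

lemma labelDist_comm (u v : V) : labelDist H u v = labelDist H v u := by
  simp only [labelDist, Set.inter_comm (Anc H u), add_comm (ancDist H u _)]

lemma labelDist_self (v : V) : labelDist H v v = 0 :=
  nonpos_iff_eq_zero.1 <| iInf₂_le_of_le v
    ⟨⟨[v], isAscending_singleton H v⟩, ⟨[v], isAscending_singleton H v⟩⟩ (by simp [ancDist_self])

lemma labelDist_le_add_of_ascStep {u b v : V} (hub : AscStep H u b) :
    labelDist H u v ≤ H.w (level H u) u b + labelDist H b v := by
  rw [labelDist, labelDist, ENat.add_iInf₂]
  refine le_iInf₂ fun x ⟨⟨l, hl⟩, hxv⟩ => iInf₂_le_of_le x ⟨⟨u :: l, hl.cons H hub⟩, hxv⟩ ?_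
  rw [← add_assoc]
  gcongr
  exact ancDist_le_add_of_ascStep H hub

lemma wdist_le_labelDist (s t : V) : wdist (H.w 1) s t ≤ labelDist H s t := by
  refine le_iInf₂ fun x _ => ?_
  calc wdist (H.w 1) s t ≤ wdist (H.w 1) s x + wdist (H.w 1) x t := wdist_triangle s x t
    _ = wdist (H.w 1) s x + wdist (H.w 1) t x := by
        rw [wdist_comm (w_comm H le_rfl H.h_pos) x t]
    _ ≤ ancDist H s x + ancDist H t x :=
        add_le_add (wdist_le_ancDist H s x) (wdist_le_ancDist H t x)

lemma labelDist_le_wdist_lowWeight (s t : V) : labelDist H s t ≤ wdist (lowWeight H) s t :=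
  le_iInf fun ⟨_, hl⟩ => le_pathLen_of_isWalk (lowWeight_comm H)
    (fun _ _ => level_ne_of_adj_lowWeight H) (fun _ _ _ => lowWeight_le_add_of_valley H)
    (labelDist_comm H) (labelDist_self H)
    (fun u b v hub hlt => by
      rw [lowWeight_of_level_lt H hlt]
      exact labelDist_le_add_of_ascStep H ⟨hlt, hub.1, lowWeight_of_level_lt H hlt ▸ hub.2⟩)
    hl

end Ancestors

theorem dist_eq_iInf_label_general {h : ℕ}
    (H : VertexHierarchy V h) (s t : V) :
    wdist (H.w 1) s t =
      ⨅ x ∈ Anc H s ∩ Anc H t, (ancDist H s x + ancDist H t x) :=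
  (wdist_le_labelDist H s t).antisymm
    ((labelDist_le_wdist_lowWeight H s t).trans (wdist_lowWeight_le_wdist H s t))

/-- distance is realized through common ancestors using the label
distances `d(·,·)`. -/
theorem dist_eq_iInf_label [Fintype V] {h : ℕ}
    (H : VertexHierarchy V h) (s t : V) :
    wdist (H.w 1) s t =
      ⨅ x ∈ Anc H s ∩ Anc H t, (ancDist H s x + ancDist H t x) :=
  dist_eq_iInf_label_general H s t

end ISLabel
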